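/- arXiv:1211.3852 — 5 statements merged into one kernel-verified Lean document; each statement's English description precedes it below -/
import Mathlib

section
/- A nontrivial group with exactly one non-trivial conjugacy class which contains an element of finite order has exactly two elements. -/
/-!
If all non-identity elements are conjugate, they all have the order `p` of the given torsion
element, and `p` is prime because `x ^ (p / q)` has order `q` for every prime `q ∣ p`. If
`p ≠ 2`, then `x` is conjugate to `x ^ 2`, say `c x c⁻¹ = x ^ 2`; iterating `p` times gives
`x = x ^ (2 ^ p)` since `c ^ p = 1`, so `2 ^ p ≡ 1 (mod p)`, against Fermat's `2 ^ p ≡ 2`.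
Hence `G` has exponent `2`, so it is abelian, its conjugacy classes are singletons, and
`G = {1, x}`.
-/

namespace Group

variable {G : Type*} [Group G]

theorem orderOf_prime_of_forall_orderOf_eq {x : G} (hx : x ≠ 1) (hx0 : orderOf x ≠ 0)
    (h : ∀ y : G, y ≠ 1 → orderOf y = orderOf x) : (orderOf x).Prime := by
  obtain ⟨q, hq, hqx⟩ := Nat.exists_prime_and_dvd (mt orderOf_eq_one_iff.mp hx)
  have hpow : orderOf (x ^ (orderOf x / q)) = q := orderOf_pow_orderOf_div hx0 hqx
  have hpow_ne : x ^ (orderOf x / q) ≠ 1 := by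
    rw [Ne, ← orderOf_eq_one_iff, hpow]
    exact hq.one_lt.ne'
  rwa [← hpow, h _ hpow_ne] at hq

theorem conj_pow_eq_pow_pow {c x : G} {k : ℕ} (h : c * x * c⁻¹ = x ^ k) (m : ℕ) :
    c ^ m * x * (c ^ m)⁻¹ = x ^ k ^ m := by
  induction m with
  | zero => simp
  | succ m ih =>
    calc c ^ (m + 1) * x * (c ^ (m + 1))⁻¹ = c * (c ^ m * x * (c ^ m)⁻¹) * c⁻¹ := by group
      _ = (c * x * c⁻¹) ^ k ^ m := by rw [ih, conj_pow]
      _ = x ^ k ^ (m + 1) := by rw [h, ← pow_mul, pow_succ']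

theorem modEq_one_of_conj_eq_pow {c x : G} {k : ℕ} (hp : (orderOf x).Prime)
    (hc : c ^ orderOf x = 1) (h : c * x * c⁻¹ = x ^ k) : k ≡ 1 [MOD orderOf x] := by
  have : Fact (orderOf x).Prime := ⟨hp⟩
  have hiter : x ^ k ^ orderOf x = x ^ 1 := by
    rw [← conj_pow_eq_pow_pow h, hc]
    simp
  rw [← ZMod.natCast_eq_natCast_iff, ← ZMod.pow_card (k : ZMod (orderOf x)), ← Nat.cast_pow,
    ZMod.natCast_eq_natCast_iff]
  exact pow_eq_pow_iff_modEq.mp hiter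

theorem exponent_eq_two_of_forall_isConj (hconj : ∀ x y : G, x ≠ 1 → y ≠ 1 → IsConj x y)
    {x : G} (hx : x ≠ 1) (hx0 : orderOf x ≠ 0) : Monoid.exponent G = 2 := by
  have : Nontrivial G := ⟨⟨x, 1, hx⟩⟩
  have horder : ∀ y : G, y ≠ 1 → orderOf y = orderOf x := fun y hy ↦ by
    obtain ⟨c, hc⟩ := hconj y x hy hx
    exact hc.orderOf_eq
  have hp := orderOf_prime_of_forall_orderOf_eq hx hx0 horder
  have hexp : Monoid.exponent G = orderOf x := (Monoid.exponent_eq_prime_iff hp).mpr horder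
  rw [hexp]
  by_contra h2
  have hsq : x ^ 2 ≠ 1 := by
    rw [Ne, ← orderOf_dvd_iff_pow_eq_one, Nat.prime_dvd_prime_iff_eq hp Nat.prime_two]
    exact h2
  obtain ⟨c, hc⟩ := isConj_iff.mp (hconj x (x ^ 2) hx hsq)
  have h21 : 2 ≡ 1 [MOD orderOf x] :=
    modEq_one_of_conj_eq_pow hp (hexp ▸ Monoid.pow_exponent_eq_one c) hc
  exact hp.not_dvd_one ((Nat.modEq_iff_dvd' (by norm_num)).mp h21.symm)

theorem card_eq_two_of_forall_isConj (hconj : ∀ x y : G, x ≠ 1 → y ≠ 1 → IsConj x y)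
    (hG : Monoid.exponent G = 2) {x : G} (hx : x ≠ 1) : Nat.card G = 2 := by
  refine (Nat.card_eq_two_iff' 1).mpr ⟨x, hx, fun y hy ↦ ?_⟩
  obtain ⟨c, hc⟩ := isConj_iff.mp (hconj y x hy hx)
  rwa [mul_comm_of_exponent_two hG c, mul_inv_cancel_right] at hc

end Group

theorem one_conjugacy_class_torsion_card_two_general {G : Type*} [Group G]
    (hconj : ∀ x y : G, x ≠ 1 → y ≠ 1 → IsConj x y)
    (htor : ∃ x : G, x ≠ 1 ∧ orderOf x ≠ 0) :
    Nat.card G = 2 := by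
  obtain ⟨x, hx, hx0⟩ := htor
  exact Group.card_eq_two_of_forall_isConj hconj
    (Group.exponent_eq_two_of_forall_isConj hconj hx hx0) hx

theorem one_conjugacy_class_torsion_card_two {G : Type*} [Group G] [Nontrivial G]
    (hconj : ∀ x y : G, x ≠ 1 → y ≠ 1 → IsConj x y)
    (htor : ∃ x : G, x ≠ 1 ∧ orderOf x ≠ 0) :
    Nat.card G = 2 :=
  one_conjugacy_class_torsion_card_two_general hconj htor
end

section
/- A group with exactly one non-trivial conjugacy class that has more than two elements is torsion-free. -/
/-!
If some nontrivial element had finite order, a power of it would have prime order `p`, and since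
all nontrivial elements are conjugate, every nontrivial element would have order `p`. For `p = 2`
the group is abelian, so conjugacy classes are singletons, which contradicts the existence of two
distinct nontrivial elements. For odd `p`, an element `y ≠ 1` is conjugate to `y² ≠ 1`, say
`c y c⁻¹ = y²`; then `cᵏ y c⁻ᵏ = y^(2ᵏ)`, and `cᵖ = 1` forces `2ᵖ ≡ 1 mod p`, whereas Fermat's
little theorem gives `2ᵖ ≡ 2 mod p`.
-/

theorem exists_orderOf_prime {M : Type*} [Monoid M] {x : M} (hx : x ≠ 1) (hfin : orderOf x ≠ 0) :
    ∃ y : M, (orderOf y).Prime :=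
  ⟨x ^ (orderOf x / (orderOf x).minFac), by
    rw [orderOf_pow_orderOf_div hfin (Nat.minFac_dvd _)]
    exact Nat.minFac_prime (orderOf_eq_one_iff.not.mpr hx)⟩

theorem SemiconjBy.pow_left_pow {M : Type*} [Monoid M] {c y : M} {m : ℕ}
    (h : SemiconjBy c y (y ^ m)) (k : ℕ) : SemiconjBy (c ^ k) y (y ^ m ^ k) := by
  induction k with
  | zero => simp
  | succ k ih => simpa [pow_succ', pow_mul] using (h.pow_right (m ^ k)).mul_left ih

theorem SemiconjBy.modEq_one_of_orderOf_prime {M : Type*} [Monoid M] {c y : M} {m p : ℕ}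
    [hp : Fact p.Prime] (hy : orderOf y = p) (hc : c ^ p = 1) (h : SemiconjBy c y (y ^ m)) :
    m ≡ 1 [MOD p] := by
  have hfin : IsOfFinOrder y := orderOf_pos_iff.mp (hy ▸ hp.out.pos)
  have hfix : y ^ m ^ p = y ^ 1 := by
    simpa [hc, SemiconjBy] using (h.pow_left_pow p).eq.symm
  rw [hfin.pow_eq_pow_iff_modEq, hy, ← ZMod.natCast_eq_natCast_iff] at hfix
  rw [← ZMod.natCast_eq_natCast_iff, ← hfix]
  push_cast
  exact (ZMod.pow_card _).symm

theorem not_isConj_self_sq_of_forall_orderOf_eq {G : Type*} [Group G] {p : ℕ} [Fact p.Prime]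
    (horder : ∀ g : G, g ≠ 1 → orderOf g = p) {y : G} (hy : y ≠ 1) : ¬IsConj y (y ^ 2) := by
  rintro ⟨c, hc⟩
  have hc1 : (c : G) ≠ 1 := by
    intro h
    rw [h, SemiconjBy, one_mul, mul_one, pow_two, left_eq_mul] at hc
    exact hy hc
  have hcp : (c : G) ^ p = 1 := horder c hc1 ▸ pow_orderOf_eq_one (c : G)
  have htwo : 2 ≡ 1 [MOD p] := hc.modEq_one_of_orderOf_prime (horder y hy) hcp
  have hdvd : p ∣ 1 := (Nat.modEq_iff_dvd' one_le_two).mp htwo.symm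
  exact (Fact.out : p.Prime).one_lt.ne' (Nat.dvd_one.mp hdvd)

theorem eq_of_isConj_of_forall_commute {G : Type*} [Group G] (hcomm : ∀ a b : G, Commute a b)
    {x y : G} (h : IsConj x y) : x = y := by
  obtain ⟨c, rfl⟩ := isConj_iff.mp h
  rw [(hcomm c x).eq, mul_inv_cancel_right]

theorem one_conjugacy_class_torsionFree {G : Type*} [Group G]
    (hcard : 2 < Cardinal.mk G)
    (hconj : ∀ x y : G, x ≠ 1 → y ≠ 1 → IsConj x y) :
    ∀ x : G, x ≠ 1 → orderOf x = 0 := by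
  intro x hx
  by_contra hfin
  obtain ⟨y, hp⟩ := exists_orderOf_prime hx hfin
  have hy : y ≠ 1 := by
    rintro rfl
    rw [orderOf_one] at hp
    exact Nat.not_prime_one hp
  have horder : ∀ g : G, g ≠ 1 → orderOf g = orderOf y := fun g hg ↦ by
    obtain ⟨c, hc⟩ := hconj g y hg hy
    exact hc.orderOf_eq
  rcases eq_or_ne (orderOf y) 2 with h2 | h2
  · have hcomm : ∀ a b : G, Commute a b := Commute.of_orderOf_dvd_two fun g ↦ by
      rcases eq_or_ne g 1 with rfl | hg
      · simp
      · rw [horder g hg, h2]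
    have h3 : 3 ≤ Cardinal.mk G := by
      exact_mod_cast (Cardinal.natCast_add_one_le_iff (n := 2)).mpr hcard
    obtain ⟨z, hzx, hz1⟩ := Cardinal.exists_ne_ne_of_three_le h3 x 1
    exact hzx (eq_of_isConj_of_forall_commute hcomm (hconj x z hx hz1)).symm
  · have := Fact.mk hp
    exact not_isConj_self_sq_of_forall_orderOf_eq horder hy
      (hconj y (y ^ 2) hy (pow_ne_one_of_lt_orderOf two_ne_zero (hp.two_le.lt_of_ne' h2)))
end

section
/- In the free product G * ℤ, the centralizer of any non-identity element y of the factor G is equal to the centralizer of y computed in G; i.e., every element of G * ℤ commuting with y lies in G. -/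
/-!
An element `k ∉ G` of a free product can be written `k = a * m * b` with `a, b ∈ G` and `m` a
nonempty reduced word whose first and last letters lie outside `G`. If `z * k = k * y` with
`y, z ∈ G` and `y ≠ 1`, then `z' * m * y'⁻¹ * m⁻¹ = 1` for the nontrivial conjugates
`z' = a⁻¹ * z * a` and `y' = b * y * b⁻¹`. The left side is the product of a nonempty reduced
word, which is never `1` by uniqueness of normal forms.
-/

universe u v

namespace Monoid.CoprodI

variable {ι : Type*} {G : ι → Type*} [∀ i, Group (G i)]

namespace NeWord

theorem prod_ne_one {i j : ι} (w : NeWord G i j) : w.prod ≠ 1 := by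
  classical
  intro h
  have : w.toWord = Word.empty := Word.equiv.symm.injective <|
    show Word.equiv.symm w.toWord = Word.equiv.symm .empty from h.trans Word.prod_empty.symm
  exact w.toList_ne_nil (congrArg Word.toList this)

theorem prod_eq_of_head_or_of_head_mul {i j : ι} (w : NeWord G i j) :
    (i = j ∧ w.prod = of w.head) ∨
      ∃ k, ∃ w' : NeWord G k j, i ≠ k ∧ w.prod = of w.head * w'.prod := by
  induction w with
  | singleton x hx => exact .inl ⟨rfl, prod_singleton x hx⟩
  | append w₁ hne w₂ ih₁ _ =>
    right
    rcases ih₁ with ⟨rfl, h₁⟩ | ⟨k, w₁', hk, h₁⟩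
    · exact ⟨_, w₂, hne, by simp [h₁]⟩
    · exact ⟨k, w₁'.append hne w₂, hk, by simp [h₁, mul_assoc]⟩

theorem prod_eq_of_last_or_mul_of_last {i j : ι} (w : NeWord G i j) :
    (i = j ∧ w.prod = of w.last) ∨
      ∃ k, ∃ w' : NeWord G i k, k ≠ j ∧ w.prod = w'.prod * of w.last := by
  rcases w.inv.prod_eq_of_head_or_of_head_mul with ⟨hji, h⟩ | ⟨k, w', hk, h⟩
  · refine .inl ⟨hji.symm, ?_⟩
    simpa using congrArg (·⁻¹) h
  · refine .inr ⟨k, w'.inv, hk.symm, ?_⟩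
    rw [inv_prod, inv_head] at h
    simp [← inv_inj (a := w.prod), h]

end NeWord

theorem exists_eq_of_mul_prod_mul_of {i : ι} {k : CoprodI G} (hk : k ∉ (of : G i →* _).range) :
    ∃ (a b : G i) (j₁ j₂ : ι) (w : NeWord G j₁ j₂),
      j₁ ≠ i ∧ j₂ ≠ i ∧ k = of a * w.prod * of b := by
  classical
  have hk₁ : Word.equiv k ≠ .empty := fun h ↦
    hk ⟨1, by rw [map_one, ← Word.equiv.symm_apply_apply k, h]; rfl⟩
  obtain ⟨j₁, j₂, w, hw⟩ := NeWord.of_word _ hk₁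
  have hwk : w.prod = k := by rw [NeWord.prod, hw]; exact Word.equiv.symm_apply_apply k
  obtain ⟨a, j₁', w₁, hj₁', hw₁⟩ :
      ∃ (a : G i) (j₁' : ι) (w₁ : NeWord G j₁' j₂), j₁' ≠ i ∧ k = of a * w₁.prod := by
    by_cases hj₁ : j₁ = i
    · subst hj₁
      rcases w.prod_eq_of_head_or_of_head_mul with ⟨-, h⟩ | ⟨k', w', hk', h⟩
      · exact absurd ⟨w.head, by rw [← hwk, h]⟩ hk
      · exact ⟨w.head, k', w', hk'.symm, by rw [← hwk, h]⟩
    · exact ⟨1, j₁, w, hj₁, by simp [hwk]⟩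
  by_cases hj₂ : j₂ = i
  · subst hj₂
    rcases w₁.prod_eq_of_last_or_mul_of_last with ⟨h, -⟩ | ⟨k', w', hk', h⟩
    · exact absurd h hj₁'
    · exact ⟨a, w₁.last, j₁', k', w', hj₁', hk', by rw [hw₁, h, mul_assoc]⟩
  · exact ⟨a, 1, j₁', j₂, w₁, hj₁', hj₂, by simp [hw₁]⟩

theorem mem_range_of_of_of_mul_eq_mul_of {i : ι} {y z : G i} (hy : y ≠ 1) {k : CoprodI G}
    (h : of z * k = k * of y) : k ∈ (of : G i →* _).range := by
  by_contra hk
  obtain ⟨a, b, j₁, j₂, w, hj₁, hj₂, rfl⟩ := exists_eq_of_mul_prod_mul_of hk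
  have hz : z ≠ 1 := by
    rintro rfl
    exact hy (of_injective i (by simpa using h))
  have hz' : a⁻¹ * z * a ≠ 1 := by simpa using (conj_eq_one_iff (a := a⁻¹)).not.mpr hz
  have hy' : (b * y * b⁻¹)⁻¹ ≠ 1 := inv_ne_one.mpr (conj_eq_one_iff.not.mpr hy)
  have hconj : of (a⁻¹ * z * a) * w.prod = w.prod * of (b * y * b⁻¹) := by
    simpa [mul_assoc] using congrArg (fun x ↦ (of a)⁻¹ * x * (of b)⁻¹) h
  let W := (((NeWord.singleton _ hz').append hj₁.symm w).append hj₂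
    (NeWord.singleton _ hy')).append hj₂.symm w.inv
  apply W.prod_ne_one
  simp only [W, NeWord.append_prod, NeWord.prod_singleton, NeWord.inv_prod, hconj, map_inv,
    mul_inv_cancel_right, mul_inv_cancel]

end Monoid.CoprodI

instance Bool.condGroup {G H : Type u} [Group G] [Group H] : ∀ b, Group (cond b G H)
  | true => ‹Group G›
  | false => ‹Group H›

namespace Monoid.Coprod

variable (G H : Type u) [Group G] [Group H] in
def mulEquivCoprodI : G ∗ H ≃* CoprodI (fun b ↦ cond b G H) :=
  MonoidHom.toMulEquiv
    (lift (CoprodI.of (M := fun b ↦ cond b G H) (i := true))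
      (CoprodI.of (M := fun b ↦ cond b G H) (i := false)))
    (CoprodI.lift fun | true => inl | false => inr)
    (hom_ext (MonoidHom.ext fun _ ↦ by simp) (MonoidHom.ext fun _ ↦ by simp))
    (CoprodI.ext_hom _ _ fun
      | true => MonoidHom.ext fun _ ↦ by simp
      | false => MonoidHom.ext fun _ ↦ by simp)

theorem mem_range_inl_of_inl_mul_eq_mul_inl {G : Type u} {H : Type v} [Group G] [Group H]
    {y z : G} (hy : y ≠ 1) {k : G ∗ H} (h : inl z * k = k * inl y) :
    k ∈ (inl : G →* G ∗ H).range := by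
  -- `CoprodI` needs all factors in one universe, hence the `ULift`s.
  let e := (MulEquiv.coprodCongr (MulEquiv.ulift : ULift.{v} G ≃* G).symm
    (MulEquiv.ulift : ULift.{u} H ≃* H).symm).trans (mulEquivCoprodI _ _)
  have he : ∀ g : G, e (inl g) =
      CoprodI.of (M := fun b ↦ cond b (ULift.{v} G) (ULift.{u} H)) (i := true) ⟨g⟩ :=
    fun _ ↦ rfl
  obtain ⟨g, hg⟩ := CoprodI.mem_range_of_of_of_mul_eq_mul_of
    (G := fun b ↦ cond b (ULift.{v} G) (ULift.{u} H)) (i := true) (y := ⟨y⟩) (z := ⟨z⟩)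
    (fun h ↦ hy (congrArg ULift.down h)) (k := e k) (by simpa [he] using congrArg e h)
  refine ⟨g.down, e.injective ?_⟩
  rw [← hg, he]
  rfl

end Monoid.Coprod

theorem centralizer_in_factor {G : Type*} [Group G] (y : G) (hy : y ≠ 1) :
    ∀ k : Monoid.Coprod G (Multiplicative ℤ),
      k * Monoid.Coprod.inl y = Monoid.Coprod.inl y * k →
      ∃ g : G, g * y = y * g ∧ k = Monoid.Coprod.inl g := by
  intro k hk
  obtain ⟨g, rfl⟩ := Monoid.Coprod.mem_range_inl_of_inl_mul_eq_mul_inl hy hk.symm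
  exact ⟨g, Monoid.Coprod.inl_injective (by simpa using hk), rfl⟩
end

section
/- In a free group, if aⁿ = bⁿ for a natural number n ≥ 1, then a = b. -/
theorem freeGroup_pow_injective {α : Type*} (a b : FreeGroup α) (n : ℕ)
    (hn : 1 ≤ n) (h : a ^ n = b ^ n) : a = b :=
  pow_left_injective (Nat.one_le_iff_ne_zero.mp hn) h
end

section
/- In a free group, if a and b are not proper powers (each equals vᵏ only for k = 1) and aⁿ = bᵐ for some positive integers n, m, then a = b and n = m. -/
/-!
By Nielsen–Schreier every subgroup of a free group is free, and a commutative free group has at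
most one generator (two distinct generators already fail to commute in `Perm (Fin 3)`), so two
commuting elements of a free group are powers of a common element. Consequently a free group
with nontrivial center is cyclic, and the centralizer of any `g ≠ 1` is cyclic.

Now `aⁿ = bᵐ ≠ 1` commutes with `a` and `b`, so `a = cˢ` and `b = cᵗ`; since `a` and `b` are not
proper powers, `s, t ∈ {1, -1}`, and since `c` has infinite order, `s n = t m`. Hence `s = t`
and `n = m`.
-/

open Subgroup

namespace FreeGroup

variable {ι : Type*}

theorem not_commute_of_ne {i j : ι} (hij : i ≠ j) : ¬Commute (of i) (of j) := by
  classical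
  intro h
  have hf := congrArg (FreeGroup.lift fun k =>
    if k = i then Equiv.swap (0 : Fin 3) 1 else if k = j then Equiv.swap 1 2 else 1) h.eq
  simp only [_root_.map_mul, lift_apply_of, ↓reduceIte, hij.symm] at hf
  exact absurd hf (by decide)

theorem subsingleton_of_isMulCommutative [IsMulCommutative (FreeGroup ι)] : Subsingleton ι :=
  ⟨fun _ _ => by_contra fun hij => not_commute_of_ne hij (mul_comm' _ _)⟩

instance [Subsingleton ι] : IsCyclic (FreeGroup ι) := by
  cases isEmpty_or_nonempty ι
  · infer_instance
  · have : Unique ι := uniqueOfSubsingleton (Classical.arbitrary ι)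
    infer_instance

theorem eq_zero_of_zpow_of_eq_zpow_of {i j : ι} (hij : i ≠ j) {p q : ℤ}
    (h : of i ^ p = of j ^ q) : p = 0 := by
  classical
  let killJ : FreeGroup ι →* FreeGroup ι := FreeGroup.lift fun k => if k = j then 1 else of k
  have := congrArg killJ h
  simp only [map_zpow, lift_apply_of, killJ, if_neg hij, if_true, one_zpow] at this
  exact (IsMulTorsionFree.zpow_eq_one_iff_right (of_ne_one i)).1 this

end FreeGroup

namespace IsFreeGroup

variable {G : Type*} [Group G] [IsFreeGroup G]

theorem isCyclic_of_isMulCommutative [IsMulCommutative G] : IsCyclic G := by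
  have : IsMulCommutative (FreeGroup (Generators G)) := .of_comm fun x y =>
    (toFreeGroup G).symm.injective (by simp only [map_mul, mul_comm'])
  have := FreeGroup.subsingleton_of_isMulCommutative (ι := Generators G)
  exact (toFreeGroup G).isCyclic.2 inferInstance

theorem exists_mem_zpowers_of_commute {x y : G} (h : Commute x y) :
    ∃ c : G, x ∈ zpowers c ∧ y ∈ zpowers c := by
  have : IsMulCommutative (closure {x, y}) := isMulCommutative_closure <| by
    rintro u (rfl | rfl) v (rfl | rfl) <;> first | rfl | exact h.eq | exact h.eq.symm
  obtain ⟨c, hc⟩ := (isCyclic_of_isMulCommutative (G := closure {x, y})).exists_generator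
  obtain ⟨s, hs⟩ := mem_zpowers_iff.1 (hc ⟨x, subset_closure (by simp)⟩)
  obtain ⟨t, ht⟩ := mem_zpowers_iff.1 (hc ⟨y, subset_closure (by simp)⟩)
  exact ⟨c, ⟨s, congrArg Subtype.val hs⟩, ⟨t, congrArg Subtype.val ht⟩⟩

theorem exists_zpow_eq_zpow_of_commute {x y : G} (h : Commute x y) (hx : x ≠ 1) (hy : y ≠ 1) :
    ∃ s t : ℤ, s ≠ 0 ∧ t ≠ 0 ∧ x ^ s = y ^ t := by
  obtain ⟨c, ⟨p, rfl⟩, ⟨q, rfl⟩⟩ := exists_mem_zpowers_of_commute h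
  refine ⟨q, p, ?_, ?_, by rw [← zpow_mul, ← zpow_mul, mul_comm]⟩
  · rintro rfl; exact hy (zpow_zero c)
  · rintro rfl; exact hx (zpow_zero c)

end IsFreeGroup

namespace FreeGroup

variable {ι : Type*}

theorem subsingleton_of_mem_center {z : FreeGroup ι} (hz : z ∈ center (FreeGroup ι))
    (hz1 : z ≠ 1) : Subsingleton ι := by
  refine ⟨fun i j => by_contra fun hij => ?_⟩
  have commensurable (k : ι) : ∃ s t : ℤ, s ≠ 0 ∧ t ≠ 0 ∧ z ^ s = of k ^ t :=
    IsFreeGroup.exists_zpow_eq_zpow_of_commute (mem_center_iff.1 hz (of k)).symm hz1 (of_ne_one k)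
  obtain ⟨s, t, hs, ht, hi⟩ := commensurable i
  obtain ⟨s', t', hs', ht', hj⟩ := commensurable j
  have : of i ^ (t * s') = of j ^ (t' * s) := by
    rw [zpow_mul, ← hi, ← zpow_mul, mul_comm, zpow_mul, hj, ← zpow_mul]
  exact mul_ne_zero ht hs' (eq_zero_of_zpow_of_eq_zpow_of hij this)

end FreeGroup

namespace IsFreeGroup

variable {G : Type*} [Group G] [IsFreeGroup G]

theorem isCyclic_of_mem_center {z : G} (hz : z ∈ center G) (hz1 : z ≠ 1) : IsCyclic G := by
  have hz' : toFreeGroup G z ∈ center _ := mem_center_iff.2 fun g => by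
    simpa using congrArg (toFreeGroup G) (mem_center_iff.1 hz ((toFreeGroup G).symm g))
  have := FreeGroup.subsingleton_of_mem_center hz' (by simpa using hz1)
  exact (toFreeGroup G).isCyclic.2 inferInstance

theorem commute_trans {g x y : G} (hg : g ≠ 1) (hx : Commute x g) (hy : Commute g y) :
    Commute x y := by
  have hmem {u : G} (hu : Commute u g) : u ∈ centralizer {g} :=
    mem_centralizer_singleton_iff.2 hu.eq
  have : IsCyclic (centralizer {g}) := isCyclic_of_mem_center (z := ⟨g, hmem (Commute.refl g)⟩)
    (mem_center_iff.2 fun u => Subtype.ext (mem_centralizer_singleton_iff.1 u.2))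
    (by simpa using hg)
  exact congrArg Subtype.val (mul_comm' (⟨x, hmem hx⟩ : centralizer {g}) ⟨y, hmem hy.symm⟩)

end IsFreeGroup

theorem eq_one_or_eq_neg_one_of_eq_zpow {G : Type*} [Group G] {x c : G} {s : ℤ}
    (hroot : ∀ (v : G) (k : ℕ), 1 ≤ k → x = v ^ k → k = 1) (h : x = c ^ s) :
    s = 1 ∨ s = -1 := by
  have hs : s ≠ 0 := by
    rintro rfl
    exact absurd (hroot 1 2 (by norm_num) (by simp [h])) (by norm_num)
  rcases Int.natAbs_eq s with hs' | hs'
  · left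
    rw [hs', zpow_natCast] at h
    rw [hs', hroot c _ (by omega) h, Nat.cast_one]
  · right
    rw [hs', zpow_neg, zpow_natCast, ← inv_pow] at h
    rw [hs', hroot c⁻¹ _ (by omega) h, Nat.cast_one]

theorem freeGroup_minimal_root_unique_general {α : Type*} (a b : FreeGroup α)
    (ha : a ≠ 1)
    (hra : ∀ (v : FreeGroup α) (k : ℕ), 1 ≤ k → a = v ^ k → k = 1)
    (hrb : ∀ (v : FreeGroup α) (k : ℕ), 1 ≤ k → b = v ^ k → k = 1)
    (n m : ℕ) (hn : 1 ≤ n) (h : a ^ n = b ^ m) :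
    a = b ∧ n = m := by
  have hg : a ^ n ≠ 1 := (pow_eq_one_iff_left (by omega)).not.2 ha
  have hab : Commute a b :=
    IsFreeGroup.commute_trans hg (Commute.self_pow a n) (h ▸ Commute.pow_self b m)
  obtain ⟨c, ⟨s, rfl⟩, ⟨t, rfl⟩⟩ := IsFreeGroup.exists_mem_zpowers_of_commute hab
  have hc : c ≠ 1 := by rintro rfl; simp at ha
  have hst : s * n = t * m := injective_zpow_iff_not_isOfFinOrder.2
    (not_isOfFinOrder_of_isMulTorsionFree hc) (by simpa only [zpow_mul, zpow_natCast] using h)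
  rcases eq_one_or_eq_neg_one_of_eq_zpow hra rfl with rfl | rfl <;>
    rcases eq_one_or_eq_neg_one_of_eq_zpow hrb rfl with rfl | rfl <;>
    constructor <;> first | rfl | omega

theorem freeGroup_minimal_root_unique {α : Type*} (a b : FreeGroup α)
    (ha : a ≠ 1) (hb : b ≠ 1)
    (hra : ∀ (v : FreeGroup α) (k : ℕ), 1 ≤ k → a = v ^ k → k = 1)
    (hrb : ∀ (v : FreeGroup α) (k : ℕ), 1 ≤ k → b = v ^ k → k = 1)
    (n m : ℕ) (hn : 1 ≤ n) (hm : 1 ≤ m) (h : a ^ n = b ^ m) :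
    a = b ∧ n = m :=
  freeGroup_minimal_root_unique_general a b ha hra hrb n m hn h
end
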